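/- arXiv:2302.10090 — 9 statements merged into one kernel-verified Lean document; each statement's English description precedes it below -/
import Mathlib

section
/- Let {T_α}_{α∈I} be a dilation family on (X,d,x₀). Then for every x ∈ X, lim_{α→1, α∈I} T_α(x) = x. -/
open Filter Topology Set

/-- A dilation family on `(X, d, x₀)` indexed by a multiplicatively closed
set `I ⊆ ℝ≥0`. -/
def IsDilationFamily {X : Type*} [MetricSpace X] (I : Set ℝ) (T : ℝ → X → X) (x₀ : X) : Prop :=
  I ⊆ Set.Ici 0 ∧
  (∀ α ∈ I, ∀ β ∈ I, α * β ∈ I) ∧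
  (∀ α ∈ I, ∀ x y : X, dist (T α x) (T α y) = α * dist x y) ∧
  (∀ α ∈ I, T α x₀ = x₀) ∧
  (∀ α ∈ I, ∀ β ∈ I, ∀ x : X, T α (T β x) = T (α * β) x) ∧
  (∀ x : X, ∃ L : X, Tendsto (fun α => T α x) (𝓝[I] 1) (𝓝 L))

/-- A pure set: a subset of `ℝ≥0` containing `1`, closed under multiplication, and
closed under the appropriate divisions. -/
def IsPureSet (I : Set ℝ) : Prop :=
  I ⊆ Set.Ici 0 ∧ (1 : ℝ) ∈ I ∧ (∀ α ∈ I, ∀ β ∈ I, α * β ∈ I) ∧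
  ((I ⊆ Set.Ici 1 ∧ ∀ α ∈ I, ∀ β ∈ I, α < β → β / α ∈ I) ∨
   (I ⊆ Set.Icc 0 1 ∧ ∀ α ∈ I, ∀ β ∈ I, α < β → α / β ∈ I) ∨
   (∀ α ∈ I, ∀ β ∈ I, β ≠ 0 → α / β ∈ I))

/-- For a dilation family, `lim_{α→1, α∈I} T_α(x) = x` for every `x`. -/
theorem stmt_2 {X : Type*} [MetricSpace X] (I : Set ℝ) (T : ℝ → X → X) (x₀ : X)
    (hT : IsDilationFamily I T x₀) :
    ∀ x : X, Tendsto (fun α => T α x) (𝓝[I] 1) (𝓝 x) := by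
  obtain ⟨hI0, hmul, hdist, hfix, hcomp, hlim⟩ := hT
  intro x
  obtain ⟨L, hL⟩ := hlim x
  have hsq : Tendsto (fun α : ℝ => α * α) (𝓝[I] 1) (𝓝[I] 1) := by
    rw [tendsto_nhdsWithin_iff]
    constructor
    · have h1 : Tendsto (fun α : ℝ => α * α) (𝓝 1) (𝓝 (1 * 1)) :=
        (continuous_id.mul continuous_id).tendsto 1
      simpa using h1.mono_left nhdsWithin_le_nhds
    · filter_upwards [eventually_mem_nhdsWithin] with α hα
      exact hmul α hα α hα
  rw [Metric.tendsto_nhds]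
  intro ε hε
  have h1 := (Metric.tendsto_nhds.1 hL) (ε / 8) (by linarith)
  have h2 := (Metric.tendsto_nhds.1 (hL.comp hsq)) (ε / 8) (by linarith)
  have h3 : ∀ᶠ α : ℝ in 𝓝[I] 1, (1 / 2 : ℝ) < α :=
    (eventually_gt_nhds (by norm_num)).filter_mono nhdsWithin_le_nhds
  filter_upwards [h1, h2, h3, eventually_mem_nhdsWithin] with α ha hb hc hd
  have hb' : dist (T (α * α) x) L < ε / 8 := hb
  have key : α * dist x (T α x) < ε / 4 := by
    have e1 : T α (T α x) = T (α * α) x := hcomp α hd α hd x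
    have e2 : dist (T α x) (T α (T α x)) = α * dist x (T α x) := hdist α hd x (T α x)
    have tri : dist (T α x) (T (α * α) x) ≤ dist (T α x) L + dist L (T (α * α) x) :=
      dist_triangle _ _ _
    rw [← e2, e1]
    rw [dist_comm L _] at tri
    linarith
  have hnn : 0 ≤ dist x (T α x) := dist_nonneg
  have : dist x (T α x) < ε / 2 := by nlinarith
  rw [dist_comm]
  linarith
end

section
/- Let {T_α}_{α∈I} be a dilation family on (X,d,x₀) with I a pure set. Then for every x ∈ X, the map T^x : I → X defined by α ↦ T_α(x) is continuous, and is uniformly continuous on [a,b] ∩ I for any 0 < a ≤ b. -/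
open Filter Topology Set

/-!
The limit `L = lim_{γ → 1} T_γ y` must be `y`: both `T_γ y` and `T_{γ²} y = T_γ (T_γ y)`
tend to `L`, while `d(T_γ y, T_γ (T_γ y)) = γ d(y, T_γ y)`. For `0 < α < β` in a pure set one of
`β/α`, `α/β` lies in `I`; calling it `ρ`, `d(T_α x, T_β x)` is `α` or `β` times `d(x, T_ρ x)`,
and `|ρ - 1| ≤ (β - α)/α`. On `[a, b]` this gives uniform continuity, hence continuity at every
`β > 0`. At `β = 0` we have `d(T_α x, x₀) = α d(x, x₀)`.
-/

theorem tendsto_mul_self_nhdsWithin_one {M : Type*} [TopologicalSpace M] [MulOneClass M]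
    [ContinuousMul M] {s : Set M} (hs : ∀ a ∈ s, ∀ b ∈ s, a * b ∈ s) :
    Tendsto (fun a : M => a * a) (𝓝[s] 1) (𝓝[s] 1) := by
  refine tendsto_nhdsWithin_of_tendsto_nhds_of_eventually_within _ ?_
    (eventually_nhdsWithin_of_forall fun a ha => hs a ha a ha)
  exact ((continuous_id'.mul continuous_id').tendsto' 1 1 (one_mul 1)).mono_left nhdsWithin_le_nhds

theorem IsPureSet.div_mem_or_div_mem {I : Set ℝ} (hI : IsPureSet I) {α β : ℝ} (hα : α ∈ I)
    (hβ : β ∈ I) (hα0 : 0 < α) (hαβ : α < β) : β / α ∈ I ∨ α / β ∈ I := by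
  rcases hI.2.2.2 with ⟨-, hdiv⟩ | ⟨-, hdiv⟩ | hdiv
  · exact .inl (hdiv α hα β hβ hαβ)
  · exact .inr (hdiv α hα β hβ hαβ)
  · exact .inl (hdiv β hβ α hα hα0.ne')

namespace IsDilationFamily

variable {X : Type*} [MetricSpace X] {I : Set ℝ} {T : ℝ → X → X} {x₀ : X}
  {α β : ℝ}

theorem nonneg (hT : IsDilationFamily I T x₀) (hα : α ∈ I) : 0 ≤ α := hT.1 hα

theorem mul_mem (hT : IsDilationFamily I T x₀) : ∀ α ∈ I, ∀ β ∈ I, α * β ∈ I := hT.2.1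

theorem dist_apply (hT : IsDilationFamily I T x₀) (hα : α ∈ I) (x y : X) :
    dist (T α x) (T α y) = α * dist x y :=
  hT.2.2.1 α hα x y

theorem apply_base (hT : IsDilationFamily I T x₀) (hα : α ∈ I) : T α x₀ = x₀ :=
  hT.2.2.2.1 α hα

theorem apply_apply (hT : IsDilationFamily I T x₀) (hα : α ∈ I) (hβ : β ∈ I) (x : X) :
    T α (T β x) = T (α * β) x :=
  hT.2.2.2.2.1 α hα β hβ x

theorem exists_tendsto (hT : IsDilationFamily I T x₀) (x : X) :
    ∃ L, Tendsto (fun α => T α x) (𝓝[I] 1) (𝓝 L) :=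
  hT.2.2.2.2.2 x

theorem dist_apply_base (hT : IsDilationFamily I T x₀) (hα : α ∈ I) (x : X) :
    dist (T α x) x₀ = α * dist x x₀ := by
  rw [← hT.dist_apply hα, hT.apply_base hα]

theorem dist_apply_apply_mul (hT : IsDilationFamily I T x₀) {ρ : ℝ} (hα : α ∈ I) (hρ : ρ ∈ I)
    (x : X) : dist (T α x) (T (α * ρ) x) = α * dist x (T ρ x) := by
  rw [← hT.apply_apply hα hρ, hT.dist_apply hα]

theorem tendsto_apply_nhdsWithin_one (hT : IsDilationFamily I T x₀) (y : X) :
    Tendsto (fun γ => T γ y) (𝓝[I] 1) (𝓝 y) := by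
  obtain ⟨L, hL⟩ := hT.exists_tendsto y
  have hscaled : Tendsto (fun γ => γ * dist y (T γ y)) (𝓝[I] 1) (𝓝 0) := by
    have h := hL.dist (hL.comp (tendsto_mul_self_nhdsWithin_one hT.mul_mem))
    rw [dist_self] at h
    refine h.congr' (eventually_nhdsWithin_of_forall fun γ hγ => ?_)
    exact hT.dist_apply_apply_mul hγ hγ y
  have hinv : Tendsto (fun γ : ℝ => γ⁻¹) (𝓝[I] 1) (𝓝 1) := by
    simpa using ((continuousAt_inv₀ (one_ne_zero (α := ℝ))).tendsto).mono_left nhdsWithin_le_nhds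
  have hprod := hinv.mul hscaled
  rw [one_mul] at hprod
  rw [tendsto_iff_dist_tendsto_zero]
  refine hprod.congr' ?_
  filter_upwards [eventually_nhdsWithin_of_eventually_nhds (eventually_ne_nhds one_ne_zero)]
    with γ hγ
  rw [inv_mul_cancel_left₀ hγ, dist_comm]

theorem exists_dist_apply_le (hT : IsDilationFamily I T x₀) (hI : IsPureSet I) (hα : α ∈ I)
    (hβ : β ∈ I) (hα0 : 0 < α) (hαβ : α < β) (x : X) :
    ∃ ρ ∈ I, dist (T α x) (T β x) ≤ β * dist (T ρ x) x ∧ |ρ - 1| ≤ (β - α) / α := by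
  have hβ0 : 0 < β := hα0.trans hαβ
  rcases hI.div_mem_or_div_mem hα hβ hα0 hαβ with hρ | hρ
  · refine ⟨β / α, hρ, ?_, ?_⟩
    · calc dist (T α x) (T β x) = dist (T α x) (T (α * (β / α)) x) := by
            rw [mul_div_cancel₀ β hα0.ne']
        _ = α * dist x (T (β / α) x) := hT.dist_apply_apply_mul hα hρ x
        _ ≤ β * dist (T (β / α) x) x := by rw [dist_comm x]; gcongr
    · rw [abs_of_nonneg (by rw [sub_nonneg, le_div_iff₀ hα0]; linarith)]
      exact (div_sub_one hα0.ne').le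
  · refine ⟨α / β, hρ, ?_, ?_⟩
    · calc dist (T α x) (T β x) = dist (T β x) (T (β * (α / β)) x) := by
            rw [mul_div_cancel₀ α hβ0.ne', dist_comm]
        _ ≤ β * dist (T (α / β) x) x := by rw [hT.dist_apply_apply_mul hβ hρ, dist_comm x]
    · rw [abs_of_nonpos (by rw [sub_nonpos, div_le_one hβ0]; linarith), neg_sub,
        one_sub_div hβ0.ne']
      gcongr

theorem uniformContinuousOn_Icc_inter (hT : IsDilationFamily I T x₀) (hI : IsPureSet I)
    {a b : ℝ} (ha : 0 < a) (x : X) : UniformContinuousOn (fun α => T α x) (Icc a b ∩ I) := by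
  rw [Metric.uniformContinuousOn_iff]
  intro ε hε
  have hsmall : ∀ᶠ ρ in 𝓝[I] 1, b * dist (T ρ x) x < ε := by
    have h := ((tendsto_iff_dist_tendsto_zero.mp (hT.tendsto_apply_nhdsWithin_one x)).const_mul b)
    rw [mul_zero] at h
    exact h.eventually (gt_mem_nhds hε)
  obtain ⟨η, hη, hball⟩ := Metric.mem_nhdsWithin_iff.mp hsmall
  suffices key : ∀ α ∈ Icc a b ∩ I, ∀ β ∈ Icc a b ∩ I, α < β → β - α < a * η →
      dist (T α x) (T β x) < ε by
    refine ⟨a * η, by positivity, fun α hα β hβ hd => ?_⟩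
    rw [Real.dist_eq] at hd
    rcases lt_trichotomy α β with h | rfl | h
    · exact key α hα β hβ h (by rw [abs_sub_comm] at hd; exact (le_abs_self _).trans_lt hd)
    · rwa [dist_self]
    · rw [dist_comm]; exact key β hβ α hα h ((le_abs_self _).trans_lt hd)
  rintro α ⟨hαab, hαI⟩ β ⟨hβab, hβI⟩ hαβ hd
  have hα0 : 0 < α := ha.trans_le hαab.1
  obtain ⟨ρ, hρI, hbound, hρ1⟩ := hT.exists_dist_apply_le hI hαI hβI hα0 hαβ x
  have hρη : ρ ∈ Metric.ball 1 η := by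
    rw [Metric.mem_ball, Real.dist_eq]
    calc |ρ - 1| ≤ (β - α) / α := hρ1
      _ ≤ (β - α) / a := div_le_div_of_nonneg_left (by linarith) ha hαab.1
      _ < η := by rw [div_lt_iff₀ ha]; linarith
  calc dist (T α x) (T β x) ≤ β * dist (T ρ x) x := hbound
    _ ≤ b * dist (T ρ x) x := by gcongr; exact hβab.2
    _ < ε := hball ⟨hρη, hρI⟩

theorem continuousWithinAt_zero (hT : IsDilationFamily I T x₀) (h0 : (0 : ℝ) ∈ I) (x : X) :
    ContinuousWithinAt (fun α => T α x) I 0 := by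
  have hT0 : T 0 x = x₀ := by
    simpa using hT.dist_apply_base h0 x
  rw [ContinuousWithinAt, hT0, tendsto_iff_dist_tendsto_zero]
  have hlin : Tendsto (fun α : ℝ => α * dist x x₀) (𝓝[I] 0) (𝓝 0) :=
    ((continuous_id'.mul continuous_const).tendsto' 0 0 (zero_mul _)).mono_left
      nhdsWithin_le_nhds
  exact hlin.congr' (eventually_nhdsWithin_of_forall fun α hα => (hT.dist_apply_base hα x).symm)

theorem continuousOn (hT : IsDilationFamily I T x₀) (hI : IsPureSet I) (x : X) :
    ContinuousOn (fun α => T α x) I := by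
  intro β hβ
  rcases (hT.nonneg hβ).eq_or_lt with rfl | hβ0
  · exact hT.continuousWithinAt_zero hβ x
  · have hmem : β ∈ Icc (β / 2) (2 * β) ∩ I := ⟨⟨by linarith, by linarith⟩, hβ⟩
    have h := (hT.uniformContinuousOn_Icc_inter hI (half_pos hβ0) x).continuousOn β hmem
    rwa [inter_comm, continuousWithinAt_inter (Icc_mem_nhds (by linarith) (by linarith))] at h

end IsDilationFamily

/-- For a dilation family over a pure set `I`, the map `α ↦ T_α(x)` is continuous on `I`
and uniformly continuous on `[a,b] ∩ I` for `0 < a ≤ b`. -/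
theorem stmt_3 {X : Type*} [MetricSpace X] (I : Set ℝ) (T : ℝ → X → X) (x₀ : X)
    (hI : IsPureSet I) (hT : IsDilationFamily I T x₀) :
    ∀ x : X, ContinuousOn (fun α => T α x) I ∧
      ∀ a b : ℝ, 0 < a → a ≤ b → ∀ ε > (0 : ℝ), ∃ δ > (0 : ℝ),
        ∀ α ∈ Set.Icc a b ∩ I, ∀ β ∈ Set.Icc a b ∩ I,
          |α - β| < δ → dist (T α x) (T β x) < ε := by
  intro x
  refine ⟨hT.continuousOn hI x, fun a b ha _ ε hε => ?_⟩
  obtain ⟨δ, hδ, hclose⟩ :=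
    Metric.uniformContinuousOn_iff.mp (hT.uniformContinuousOn_Icc_inter hI ha x) ε hε
  exact ⟨δ, hδ, fun α hα β hβ hαβ => hclose α hα β hβ (by rwa [Real.dist_eq])⟩
end

section
/- Let (X,d) be a complete metric space and {T_α}_{α∈I} a dilation family on (X,d,x₀) with I a pure set. Let J be the closure of I in ℝ≥0. Then J is a pure set and there exists a dilation family {T_α}_{α∈J} on (X,d,x₀) extending {T_α}_{α∈I}. -/
open Filter Topology Set

section Work

variable {X : Type*} [MetricSpace X] [CompleteSpace X] (I : Set ℝ) (T : ℝ → X → X) (x₀ : X)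

-- pure filter is below the within-filter at points of I
lemma pure_le_nhdsWithin' {α : ℝ} (hα : α ∈ I) : pure α ≤ 𝓝[I] α :=
  le_inf (pure_le_nhds α) (le_principal_iff.2 hα)

lemma lim_eq_of_mem {Y : Type*} [TopologicalSpace Y] [T2Space Y] {f : ℝ → Y} {α : ℝ} {L : Y}
    (hα : α ∈ I) (h : Tendsto f (𝓝[I] α) (𝓝 L)) : L = f α :=
  tendsto_nhds_unique (h.mono_left (pure_le_nhdsWithin' I hα)) (tendsto_pure_nhds f α)

end Work

/-- Over a complete metric space, a dilation family indexed by a pure set `I` extends to a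
dilation family indexed by the closure of `I`, and the closure is again pure. -/
theorem stmt_4 {X : Type*} [MetricSpace X] [CompleteSpace X] (I : Set ℝ) (T : ℝ → X → X)
    (x₀ : X) (hI : IsPureSet I) (hT : IsDilationFamily I T x₀) :
    IsPureSet (closure I) ∧
      ∃ S : ℝ → X → X, (∀ α ∈ I, ∀ x : X, S α x = T α x) ∧
        IsDilationFamily (closure I) S x₀ := by
  obtain ⟨hIpos, hI1, hImul, hIdiv⟩ := hI
  obtain ⟨-, hTmul, hTdist, hTfix, hTcomp, hTlim⟩ := hT
  have hIc0 : closure I ⊆ Set.Ici 0 := closure_minimal hIpos isClosed_Ici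
  have neBot : ∀ α ∈ closure I, (𝓝[I] α).NeBot := fun α hα =>
    mem_closure_iff_nhdsWithin_neBot.1 hα
  -- T 1 = id
  have hT1 : ∀ x : X, T 1 x = x := by
    intro x
    have h1 : T 1 (T 1 x) = T 1 x := by rw [hTcomp 1 hI1 1 hI1 x, one_mul]
    have h2 : dist (T 1 (T 1 x)) (T 1 x) = 1 * dist (T 1 x) x := hTdist 1 hI1 (T 1 x) x
    rw [h1] at h2
    simp at h2
    exact h2
  -- limit at 1 is the identity
  have hlim1 : ∀ x : X, Tendsto (fun β => T β x) (𝓝[I] 1) (𝓝 x) := by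
    intro x
    obtain ⟨L, hL⟩ := hTlim x
    have : L = T 1 x := lim_eq_of_mem I hI1 hL
    rwa [this, hT1 x] at hL
  -- the key ratio estimate
  have hratio : ∀ x : X, ∀ β ∈ I, ∀ γ ∈ I, 0 < β → β ≤ γ →
      ∃ r ∈ I, dist (T β x) (T γ x) ≤ γ * dist (T r x) x ∧ |r - 1| ≤ (γ - β) / β := by
    intro x β hβ γ hγ hβ0 hle
    rcases eq_or_lt_of_le hle with rfl | hlt
    · exact ⟨1, hI1, by simp [hT1, dist_nonneg, mul_nonneg (hIpos hβ) dist_nonneg], by simp⟩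
    have hγ0 : (0:ℝ) < γ := hβ0.trans hlt
    rcases hIdiv with ⟨hsub, hdiv⟩ | ⟨hsub, hdiv⟩ | hdiv
    · refine ⟨γ / β, hdiv β hβ γ hγ hlt, ?_, ?_⟩
      · have hc : T β (T (γ/β) x) = T γ x := by
          rw [hTcomp β hβ _ (hdiv β hβ γ hγ hlt), mul_div_cancel₀ _ hβ0.ne']
        calc dist (T β x) (T γ x) = dist (T β x) (T β (T (γ/β) x)) := by rw [hc]
          _ = β * dist x (T (γ/β) x) := hTdist β hβ x _
          _ ≤ γ * dist (T (γ/β) x) x := by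
              rw [dist_comm]; exact mul_le_mul_of_nonneg_right hle dist_nonneg
      · rw [abs_of_nonneg (by rw [sub_nonneg]; exact (one_le_div hβ0).2 hle),
          div_sub_one hβ0.ne']
    · refine ⟨β / γ, hdiv β hβ γ hγ hlt, ?_, ?_⟩
      · have hc : T γ (T (β/γ) x) = T β x := by
          rw [hTcomp γ hγ _ (hdiv β hβ γ hγ hlt), mul_div_cancel₀ _ hγ0.ne']
        calc dist (T β x) (T γ x) = dist (T γ (T (β/γ) x)) (T γ x) := by rw [hc]
          _ ≤ γ * dist (T (β/γ) x) x := le_of_eq (hTdist γ hγ _ x)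
      · rw [abs_of_nonpos (by rw [sub_nonpos]; exact (div_le_one hγ0).2 hle),
          neg_sub, one_sub_div hγ0.ne']
        gcongr
    · refine ⟨γ / β, hdiv γ hγ β hβ hβ0.ne', ?_, ?_⟩
      · have hc : T β (T (γ/β) x) = T γ x := by
          rw [hTcomp β hβ _ (hdiv γ hγ β hβ hβ0.ne'), mul_div_cancel₀ _ hβ0.ne']
        calc dist (T β x) (T γ x) = dist (T β x) (T β (T (γ/β) x)) := by rw [hc]
          _ = β * dist x (T (γ/β) x) := hTdist β hβ x _
          _ ≤ γ * dist (T (γ/β) x) x := by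
              rw [dist_comm]; exact mul_le_mul_of_nonneg_right hle dist_nonneg
      · rw [abs_of_nonneg (by rw [sub_nonneg]; exact (one_le_div hβ0).2 hle),
          div_sub_one hβ0.ne']
  -- uniform Cauchy estimate near any nonnegative α
  have hCau : ∀ x : X, ∀ α : ℝ, 0 ≤ α → ∀ ε > (0:ℝ), ∃ δ > (0:ℝ), ∀ β ∈ I, ∀ γ ∈ I,
      |β - α| < δ → |γ - α| < δ → dist (T β x) (T γ x) ≤ ε := by
    intro x α hα ε hε
    -- a symmetric-in-(β,γ) helper reduces to the ordered case
    rcases eq_or_lt_of_le hα with rfl | hα0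
    · -- α = 0 : crude bound dist ≤ (β+γ) * dist x x₀
      refine ⟨ε / (2 * (dist x x₀ + 1)), by positivity, ?_⟩
      intro β hβ γ hγ hβd hγd
      have hβ0 : 0 ≤ β := hIpos hβ
      have hγ0 : 0 ≤ γ := hIpos hγ
      rw [sub_zero, abs_of_nonneg hβ0] at hβd
      rw [sub_zero, abs_of_nonneg hγ0] at hγd
      have h1 : dist (T β x) x₀ = β * dist x x₀ := by
        conv_lhs => rw [← hTfix β hβ]
        exact hTdist β hβ x x₀
      have h2 : dist (T γ x) x₀ = γ * dist x x₀ := by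
        conv_lhs => rw [← hTfix γ hγ]
        exact hTdist γ hγ x x₀
      have hd : (0:ℝ) ≤ dist x x₀ := dist_nonneg
      calc dist (T β x) (T γ x) ≤ dist (T β x) x₀ + dist x₀ (T γ x) := dist_triangle _ _ _
        _ = β * dist x x₀ + γ * dist x x₀ := by rw [h1, dist_comm x₀, h2]
        _ ≤ ε := by
            have hb' : β * (2 * (dist x x₀ + 1)) < ε :=
              (lt_div_iff₀ (by positivity)).1 hβd
            have hg' : γ * (2 * (dist x x₀ + 1)) < ε :=
              (lt_div_iff₀ (by positivity)).1 hγd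
            nlinarith
    · -- α > 0 : use the ratio estimate and continuity at 1
      have hε' : (0:ℝ) < ε / (α + 1) := by positivity
      obtain ⟨η, hη, hH⟩ := Metric.tendsto_nhdsWithin_nhds.1 (hlim1 x) _ hε'
      set δ : ℝ := min 1 (min (α/2) (η * α / 8)) with hδdef
      have hδ0 : 0 < δ := by
        simp only [hδdef, lt_min_iff]
        refine ⟨one_pos, half_pos hα0, by positivity⟩
      refine ⟨δ, hδ0, ?_⟩
      have hδ1 : δ ≤ 1 := min_le_left _ _
      have hδ2 : δ ≤ α/2 := (min_le_right _ _).trans (min_le_left _ _)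
      have hδ3 : δ ≤ η * α / 8 := (min_le_right _ _).trans (min_le_right _ _)
      -- ordered version
      have key : ∀ β ∈ I, ∀ γ ∈ I, β ≤ γ → |β - α| < δ → |γ - α| < δ →
          dist (T β x) (T γ x) ≤ ε := by
        intro β hβ γ hγ hle hβd hγd
        rw [abs_sub_lt_iff] at hβd hγd
        have hβ0 : 0 < β := by linarith
        obtain ⟨r, hr, hdle, hrle⟩ := hratio x β hβ γ hγ hβ0 hle
        have hr1 : |r - 1| < η := by
          have h1 : (γ - β) / β ≤ 4 * δ / α := by
            rw [div_le_div_iff₀ hβ0 hα0]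
            nlinarith
          have h2 : 4 * δ / α ≤ η / 2 := by
            rw [div_le_div_iff₀ hα0 two_pos]
            nlinarith
          linarith [hrle]
        have hrd : dist (T r x) x < ε / (α + 1) := by
          have := hH hr (by rw [Real.dist_eq]; exact hr1)
          exact this
        have hγb : γ ≤ α + 1 := by linarith
        calc dist (T β x) (T γ x) ≤ γ * dist (T r x) x := hdle
          _ ≤ (α + 1) * dist (T r x) x := by
              exact mul_le_mul_of_nonneg_right hγb dist_nonneg
          _ ≤ (α + 1) * (ε / (α + 1)) := by
              exact mul_le_mul_of_nonneg_left hrd.le (by linarith)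
          _ = ε := by field_simp
      intro β hβ γ hγ hβd hγd
      rcases le_total β γ with h | h
      · exact key β hβ γ hγ h hβd hγd
      · rw [dist_comm]; exact key γ hγ β hβ h hγd hβd
  -- existence of limits along 𝓝[I] α for α ∈ closure I
  have hex : ∀ α : ℝ, ∀ x : X, ∃ L : X,
      α ∈ closure I → Tendsto (fun β => T β x) (𝓝[I] α) (𝓝 L) := by
    intro α x
    by_cases hα : α ∈ closure I
    · haveI := neBot α hα
      have hc : Cauchy (Filter.map (fun β => T β x) (𝓝[I] α)) := by
        rw [Metric.cauchy_iff]
        refine ⟨(neBot α hα).map _, ?_⟩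
        intro ε hε
        obtain ⟨δ, hδ, H⟩ := hCau x α (hIc0 hα) (ε/2) (half_pos hε)
        refine ⟨(fun β => T β x) '' (I ∩ Metric.ball α δ), ?_, ?_⟩
        · exact image_mem_map (inter_mem_nhdsWithin I (Metric.ball_mem_nhds α hδ))
        · rintro _ ⟨β, ⟨hβI, hβb⟩, rfl⟩ _ ⟨γ, ⟨hγI, hγb⟩, rfl⟩
          rw [Metric.mem_ball, Real.dist_eq] at hβb hγb
          exact lt_of_le_of_lt (H β hβI γ hγI hβb hγb) (half_lt_self hε)
      obtain ⟨L, hL⟩ := CompleteSpace.complete hc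
      exact ⟨L, fun _ => hL⟩
    · exact ⟨x₀, fun h => absurd h hα⟩
  choose S hS using hex
  have hS' : ∀ α ∈ closure I, ∀ x : X,
      Tendsto (fun β => T β x) (𝓝[I] α) (𝓝 (S α x)) := fun α hα x => hS α x hα
  -- S extends T
  have hSext : ∀ α ∈ I, ∀ x : X, S α x = T α x := by
    intro α hα x
    exact (lim_eq_of_mem I hα (hS' α (subset_closure hα) x)).symm ▸ rfl
  -- the dilation identity for S
  have hSdist : ∀ α ∈ closure I, ∀ x y : X, dist (S α x) (S α y) = α * dist x y := by
    intro α hα x y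
    haveI := neBot α hα
    refine tendsto_nhds_unique ((hS' α hα x).dist (hS' α hα y)) ?_
    have h1 : Tendsto (fun β : ℝ => β * dist x y) (𝓝[I] α) (𝓝 (α * dist x y)) :=
      ((continuous_id.mul continuous_const).tendsto α).mono_left nhdsWithin_le_nhds
    exact h1.congr' (eventually_mem_nhdsWithin.mono fun β hβ => (hTdist β hβ x y).symm)
  -- fixed point
  have hSfix : ∀ α ∈ closure I, S α x₀ = x₀ := by
    intro α hα
    haveI := neBot α hα
    refine tendsto_nhds_unique (hS' α hα x₀) ?_
    exact tendsto_const_nhds.congr' (eventually_mem_nhdsWithin.mono fun β hβ => (hTfix β hβ).symm)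
  -- closure is multiplication-closed
  have hclosure_mul : ∀ a ∈ closure I, ∀ b ∈ closure I, a * b ∈ closure I := by
    intro a ha b hb
    obtain ⟨u, huI, hu⟩ := mem_closure_iff_seq_limit.1 ha
    obtain ⟨v, hvI, hv⟩ := mem_closure_iff_seq_limit.1 hb
    exact mem_closure_of_tendsto (hu.mul hv)
      (Eventually.of_forall fun n => hImul _ (huI n) _ (hvI n))
  -- S is close to S at nearby parameters
  have hSclose : ∀ x : X, ∀ α ∈ closure I, ∀ ε > (0:ℝ), ∃ δ > (0:ℝ),
      ∀ ν ∈ closure I, |ν - α| < δ → dist (S ν x) (S α x) ≤ ε := by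
    intro x α hα ε hε
    obtain ⟨δ, hδ, H⟩ := hCau x α (hIc0 hα) ε hε
    haveI := neBot α hα
    have step1 : ∀ β ∈ I, |β - α| < δ → dist (T β x) (S α x) ≤ ε := by
      intro β hβ hβd
      refine le_of_tendsto (tendsto_const_nhds.dist (hS' α hα x)) ?_
      have hball : ∀ᶠ γ in 𝓝[I] α, |γ - α| < δ := by
        apply eventually_nhdsWithin_of_eventually_nhds
        have : Metric.ball α δ ∈ 𝓝 α := Metric.ball_mem_nhds α hδ
        filter_upwards [this] with γ hγ
        rwa [Metric.mem_ball, Real.dist_eq] at hγ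
      filter_upwards [hball, eventually_mem_nhdsWithin] with γ hγd hγI
      exact H β hβ γ hγI hβd hγd
    refine ⟨δ/2, half_pos hδ, ?_⟩
    intro ν hν hνd
    haveI := neBot ν hν
    refine le_of_tendsto ((hS' ν hν x).dist tendsto_const_nhds) ?_
    have hball : ∀ᶠ β in 𝓝[I] ν, |β - ν| < δ/2 := by
      apply eventually_nhdsWithin_of_eventually_nhds
      have : Metric.ball ν (δ/2) ∈ 𝓝 ν := Metric.ball_mem_nhds ν (half_pos hδ)
      filter_upwards [this] with β hβ
      rwa [Metric.mem_ball, Real.dist_eq] at hβ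
    filter_upwards [hball, eventually_mem_nhdsWithin] with β hβd hβI
    have : |β - α| < δ := by
      have := abs_sub_abs_le_abs_sub β ν
      calc |β - α| ≤ |β - ν| + |ν - α| := abs_sub_le β ν α
        _ < δ/2 + δ/2 := add_lt_add hβd hνd
        _ = δ := add_halves δ
    exact step1 β hβI this
  -- continuity of S in the parameter along closure I
  have hScont : ∀ α ∈ closure I, ∀ x : X,
      Tendsto (fun ν => S ν x) (𝓝[closure I] α) (𝓝 (S α x)) := by
    intro α hα x
    rw [Metric.tendsto_nhdsWithin_nhds]
    intro ε hε
    obtain ⟨δ, hδ, H⟩ := hSclose x α hα (ε/2) (half_pos hε)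
    refine ⟨δ, hδ, fun {ν} hν hd => ?_⟩
    rw [Real.dist_eq] at hd
    exact lt_of_le_of_lt (H ν hν hd) (half_lt_self hε)
  -- composition with an inner T
  have hA : ∀ γ ∈ I, ∀ α ∈ closure I, ∀ x : X, S α (T γ x) = S (α * γ) x := by
    intro γ hγ α hα x
    haveI := neBot α hα
    refine tendsto_nhds_unique (hS' α hα (T γ x)) ?_
    have h2 : Tendsto (fun μ : ℝ => T (μ * γ) x) (𝓝[I] α) (𝓝 (S (α * γ) x)) := by
      refine (hS' (α * γ) (hclosure_mul α hα γ (subset_closure hγ)) x).comp ?_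
      rw [tendsto_nhdsWithin_iff]
      constructor
      · exact ((continuous_id.mul continuous_const).tendsto α).mono_left nhdsWithin_le_nhds
      · exact eventually_mem_nhdsWithin.mono fun μ hμ => hImul μ hμ γ hγ
    exact h2.congr' (eventually_mem_nhdsWithin.mono fun μ hμ => (hTcomp μ hμ γ hγ x).symm)
  -- composition for S
  have hScomp : ∀ α ∈ closure I, ∀ β ∈ closure I, ∀ x : X, S α (S β x) = S (α * β) x := by
    intro α hα β hβ x
    haveI := neBot β hβ
    have B1 : Tendsto (fun δ : ℝ => S α (T δ x)) (𝓝[I] β) (𝓝 (S α (S β x))) := by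
      rw [tendsto_iff_dist_tendsto_zero]
      have heq : ∀ δ : ℝ, dist (S α (T δ x)) (S α (S β x)) = α * dist (T δ x) (S β x) :=
        fun δ => hSdist α hα _ _
      simp only [heq]
      have := (tendsto_iff_dist_tendsto_zero.1 (hS' β hβ x)).const_mul α
      rwa [mul_zero] at this
    have B2 : Tendsto (fun δ : ℝ => S (α * δ) x) (𝓝[I] β) (𝓝 (S (α * β) x)) := by
      refine (hScont (α * β) (hclosure_mul α hα β hβ) x).comp ?_
      rw [tendsto_nhdsWithin_iff]
      constructor
      · exact ((continuous_const.mul continuous_id).tendsto β).mono_left nhdsWithin_le_nhds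
      · exact eventually_mem_nhdsWithin.mono fun δ hδ => hclosure_mul α hα δ (subset_closure hδ)
    refine tendsto_nhds_unique ?_ B2
    exact B1.congr' (eventually_mem_nhdsWithin.mono fun δ hδ => hA δ hδ α hα x)
  -- purity of the closure
  have hpure : IsPureSet (closure I) := by
    refine ⟨hIc0, subset_closure hI1, hclosure_mul, ?_⟩
    rcases hIdiv with ⟨hsub, hdiv⟩ | ⟨hsub, hdiv⟩ | hdiv
    · left
      refine ⟨closure_minimal hsub isClosed_Ici, ?_⟩
      intro a ha b hb hab
      have ha0 : (0:ℝ) < a := lt_of_lt_of_le one_pos (closure_minimal hsub isClosed_Ici ha)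
      obtain ⟨u, huI, hu⟩ := mem_closure_iff_seq_limit.1 ha
      obtain ⟨v, hvI, hv⟩ := mem_closure_iff_seq_limit.1 hb
      refine mem_closure_of_tendsto (hv.div hu (ne_of_gt ha0)) ?_
      have h1 : ∀ᶠ n in atTop, u n < (a + b) / 2 := hu.eventually_lt_const (by linarith)
      have h2 : ∀ᶠ n in atTop, (a + b) / 2 < v n := hv.eventually_const_lt (by linarith)
      filter_upwards [h1, h2] with n hn1 hn2
      exact hdiv (u n) (huI n) (v n) (hvI n) (hn1.trans hn2)
    · right; left
      refine ⟨closure_minimal hsub isClosed_Icc, ?_⟩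
      intro a ha b hb hab
      have hb0 : (0:ℝ) < b := lt_of_le_of_lt (hIc0 ha) hab
      obtain ⟨u, huI, hu⟩ := mem_closure_iff_seq_limit.1 ha
      obtain ⟨v, hvI, hv⟩ := mem_closure_iff_seq_limit.1 hb
      refine mem_closure_of_tendsto (hu.div hv (ne_of_gt hb0)) ?_
      have h1 : ∀ᶠ n in atTop, u n < (a + b) / 2 := hu.eventually_lt_const (by linarith)
      have h2 : ∀ᶠ n in atTop, (a + b) / 2 < v n := hv.eventually_const_lt (by linarith)
      filter_upwards [h1, h2] with n hn1 hn2
      exact hdiv (u n) (huI n) (v n) (hvI n) (hn1.trans hn2)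
    · right; right
      intro a ha b hb hb0
      have hb0' : (0:ℝ) < b := lt_of_le_of_ne (hIc0 hb) (Ne.symm hb0)
      obtain ⟨u, huI, hu⟩ := mem_closure_iff_seq_limit.1 ha
      obtain ⟨v, hvI, hv⟩ := mem_closure_iff_seq_limit.1 hb
      refine mem_closure_of_tendsto (hu.div hv hb0) ?_
      have h2 : ∀ᶠ n in atTop, b / 2 < v n := hv.eventually_const_lt (by linarith)
      filter_upwards [h2] with n hn2
      exact hdiv (u n) (huI n) (v n) (hvI n) (by linarith)
  exact ⟨hpure, S, hSext,
    hIc0, hclosure_mul, hSdist, hSfix, hScomp,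
    fun x => ⟨S 1 x, hScont 1 (subset_closure hI1) x⟩⟩
end

section
/- Let (C,d) be a metric space with diameter at most 2 and X = 𝒞_{x₀}([0,1],C) with the metric D((a,c₁),(b,c₂)) = |a−b| + min(a,b)·d(c₁,c₂), D((a,c),x₀)=a. Then the boundary of the open ball B_D(x₀;1) is exactly the set {1}×C. -/
open Set Topology

/-- The relation on `[0,1] × C` identifying `{0} × C` to a point. -/
def coneSetoid (C : Type*) : Setoid (Set.Icc (0 : ℝ) 1 × C) where
  r p q := p = q ∨ (p.1.1 = 0 ∧ q.1.1 = 0)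
  iseqv := by
    refine ⟨fun p => Or.inl rfl, ?_, ?_⟩
    · rintro p q (rfl | ⟨h1, h2⟩)
      · exact Or.inl rfl
      · exact Or.inr ⟨h2, h1⟩
    · rintro p q r (rfl | ⟨h1, h2⟩) (rfl | ⟨h3, h4⟩)
      · exact Or.inl rfl
      · exact Or.inr ⟨h3, h4⟩
      · exact Or.inr ⟨h1, h2⟩
      · exact Or.inr ⟨h1, h4⟩

/-- The cone `𝒞_{x₀}([0,1], C)`: the quotient of `[0,1] × C` collapsing `{0} × C`. -/
def Cone (C : Type*) : Type _ := Quotient (coneSetoid C)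

instance (C : Type*) [TopologicalSpace C] : TopologicalSpace (Cone C) :=
  inferInstanceAs (TopologicalSpace (Quotient (coneSetoid C)))

/-- The apex of the cone. -/
noncomputable def conePt (C : Type*) [Nonempty C] : Cone C :=
  Quotient.mk (coneSetoid C) (⟨0, by norm_num⟩, Classical.arbitrary C)


/-!
`D(x₀, ·)` is the height coordinate of the cone, which is continuous for the quotient topology,
so the ball `B_D(x₀; 1)` is open and its frontier lies in the top slice `{1} × C`. Conversely
each `(1, c)` is the limit of the points `(t, c)` of the ball as `t → 1⁻`.
-/

namespace Cone

variable {C : Type*}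

noncomputable def height : Cone C → ℝ :=
  Quotient.lift (fun p : Set.Icc (0 : ℝ) 1 × C => (p.1 : ℝ)) (by
    rintro p q (rfl | ⟨hp, hq⟩)
    · rfl
    · exact hp.trans hq.symm)

@[simp]
lemma height_mk (a : Set.Icc (0 : ℝ) 1) (c : C) :
    height (Quotient.mk (coneSetoid C) (a, c)) = a :=
  rfl

lemma height_eq_one_iff {y : Cone C} :
    height y = 1 ↔ ∃ c : C, y = Quotient.mk (coneSetoid C) (⟨1, by norm_num⟩, c) := by
  induction y using Quotient.ind with
  | _ p =>
    refine ⟨fun h => ⟨p.2, congrArg _ (Prod.ext (Subtype.ext h) rfl)⟩, ?_⟩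
    rintro ⟨c, hc⟩
    rw [hc, height_mk]

variable [TopologicalSpace C]

lemma continuous_height : Continuous (height : Cone C → ℝ) :=
  (continuous_subtype_val.comp continuous_fst).quotient_lift _

lemma continuous_mk_left (c : C) :
    Continuous fun t : Set.Icc (0 : ℝ) 1 => (Quotient.mk (coneSetoid C) (t, c) : Cone C) :=
  continuous_quotient_mk'.comp (continuous_id.prodMk continuous_const)

lemma frontier_setOf_height_lt_one :
    frontier {y : Cone C | height y < 1} = {y | height y = 1} := by
  refine (frontier_lt_subset_eq continuous_height continuous_const).antisymm fun y hy => ?_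
  obtain ⟨c, rfl⟩ := height_eq_one_iff.1 hy
  rw [(isOpen_lt continuous_height continuous_const).frontier_eq]
  have one_mem_closure : (1 : Set.Icc (0 : ℝ) 1) ∈ closure (Iio 1) := by
    rw [closure_Iio' (a := (1 : Set.Icc (0 : ℝ) 1)) ⟨0, zero_lt_one⟩]
    exact mem_Iic.2 le_rfl
  have mem_closure_ball := map_mem_closure (continuous_mk_left c) one_mem_closure
    (t := {y | height y < 1}) fun t (ht : t < 1) => ht
  exact ⟨mem_closure_ball, lt_irrefl (1 : ℝ)⟩

end Cone

/-- The boundary of the open ball `B_D(x₀; 1)` in the cone is exactly `{1} × C`. -/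
theorem stmt_10 {C : Type*} [MetricSpace C] [Nonempty C]
    (D : Cone C → Cone C → ℝ)
    (hD : ∀ (a b : Set.Icc (0 : ℝ) 1) (c₁ c₂ : C),
      D (Quotient.mk (coneSetoid C) (a, c₁)) (Quotient.mk (coneSetoid C) (b, c₂)) =
        |a.1 - b.1| + min a.1 b.1 * dist c₁ c₂) :
    frontier {y : Cone C | D (conePt C) y < 1} =
      {y : Cone C | ∃ c : C,
        y = Quotient.mk (coneSetoid C) (⟨1, by norm_num⟩, c)} := by
  have dist_apex : ∀ y, D (conePt C) y = Cone.height y := by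
    intro y
    induction y using Quotient.ind with
    | _ p =>
      rw [conePt, hD, Cone.height_mk, min_eq_left p.1.2.1, zero_mul, add_zero, zero_sub,
        abs_neg, abs_of_nonneg p.1.2.1]
  simp only [dist_apex, Cone.frontier_setOf_height_lt_one]
  ext y
  exact Cone.height_eq_one_iff
end

section
/- Let X be a compact Hausdorff space, x₀ ∈ X, and F : ([0,1],×) → (C_{x₀}(X),∘) a continuous injective monoid homomorphism (with the compact-open topology on C_{x₀}(X)) such that F(0) is the constant map at x₀, F(1) = Id_X, and F(α) is injective for all α ∈ (0,1]. Let C = X − ⋃_{α∈[0,1)} F(α)(X). Then {F(α)(C)}_{α∈[0,1]} is a partition of X into nonempty pairwise disjoint sets covering X. -/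
open Set Topology

/-
Every `x` lies in the range of `F 1 = id`. The set of `α` with `x ∈ range (F α)` is compact
(a projection of the closed set `{(α, y) | F α y = x}` of `[0,1] × X`), so it has a least
element `m`, positive when `x ≠ x₀` since `range (F 0) = {x₀}`; write `x = F m c`. Minimality
puts `c` in `C`: `c = F β d` with `β < 1` would give `x = F (m β) d` with `m β < m`.
Disjointness: if `F α c = F β c'` with `α < β`, then `F β (F (α / β) c) = F β c'`, so
injectivity of `F β` gives `c' = F (α / β) c ∉ C`.
-/

def coneComplement {X : Type*} [TopologicalSpace X] (F : ℝ → C(X, X)) : Set X :=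
  Set.univ \ ⋃ α ∈ Set.Ico (0 : ℝ) 1, Set.range (F α)

section

variable {X : Type*} [TopologicalSpace X] {F : ℝ → C(X, X)}

lemma mem_coneComplement {c : X} :
    c ∈ coneComplement F ↔ ∀ β ∈ Ico (0 : ℝ) 1, ∀ d, F β d ≠ c := by
  simp [coneComplement, mem_iUnion, Set.range, eq_comm]

lemma exists_isLeast_levels [CompactSpace X] [T2Space X]
    (hcont : ContinuousOn F (Icc 0 1)) (x : X) (h1 : ∀ y, F 1 y = y) :
    ∃ m, IsLeast {α ∈ Icc (0 : ℝ) 1 | x ∈ range (F α)} m := by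
  set S : Set (ℝ × X) := {p | p.1 ∈ Icc (0 : ℝ) 1 ∧ F p.1 p.2 = x}
  have hS : IsClosed S := by
    have hev : ContinuousOn (fun p : ℝ × X => F p.1 p.2) (Icc 0 1 ×ˢ univ) :=
      continuous_eval.comp_continuousOn
        ((hcont.comp continuous_fst.continuousOn fun _ hp => hp.1).prodMk
          continuous_snd.continuousOn)
    convert hev.preimage_isClosed_of_isClosed (isClosed_Icc.prod isClosed_univ)
      (isClosed_singleton (x := x)) using 1
    ext p
    simp [S, mem_prod]
  have hproj : Prod.fst '' S = {α ∈ Icc (0 : ℝ) 1 | x ∈ range (F α)} := by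
    ext α
    simp [S, mem_range]
  rw [← hproj]
  exact ((isCompact_Icc.prod isCompact_univ).of_isClosed_subset hS
      fun _ hp => ⟨hp.1, mem_univ _⟩).image continuous_fst
    |>.exists_isLeast ⟨1, (1, x), ⟨right_mem_Icc.2 zero_le_one, h1 x⟩, rfl⟩

lemma mem_coneComplement_of_isLeast
    (hmul : ∀ α ∈ Icc (0 : ℝ) 1, ∀ β ∈ Icc (0 : ℝ) 1, F (α * β) = (F α).comp (F β))
    {x c : X} {m : ℝ} (hm : IsLeast {α ∈ Icc (0 : ℝ) 1 | x ∈ range (F α)} m) (hm0 : 0 < m)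
    (hc : F m c = x) : c ∈ coneComplement F := by
  refine mem_coneComplement.2 fun β hβ d hd => ?_
  have hmβ : m * β ∈ {α ∈ Icc (0 : ℝ) 1 | x ∈ range (F α)} :=
    ⟨⟨mul_nonneg hm.1.1.1 hβ.1, mul_le_one₀ hm.1.1.2 hβ.1 hβ.2.le⟩,
      d, by rw [hmul m hm.1.1 β ⟨hβ.1, hβ.2.le⟩, ContinuousMap.comp_apply, hd, hc]⟩
  have : m ≤ m * β := hm.2 hmβ
  nlinarith [hβ.2]

lemma exists_mem_image_coneComplement [CompactSpace X] [T2Space X] {x₀ x : X}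
    (hcont : ContinuousOn F (Icc 0 1))
    (hmul : ∀ α ∈ Icc (0 : ℝ) 1, ∀ β ∈ Icc (0 : ℝ) 1, F (α * β) = (F α).comp (F β))
    (h0 : ∀ y, F 0 y = x₀) (h1 : ∀ y, F 1 y = y) (hx : x ≠ x₀) :
    ∃ α ∈ Icc (0 : ℝ) 1, x ∈ F α '' coneComplement F := by
  obtain ⟨m, hm⟩ := exists_isLeast_levels hcont x h1
  obtain ⟨hmI, c, hc⟩ := hm.1
  have hm0 : 0 < m := hmI.1.lt_of_ne fun h => hx (by rw [← hc, ← h, h0])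
  exact ⟨m, hmI, c, mem_coneComplement_of_isLeast hmul hm hm0 hc, hc⟩

lemma disjoint_image_coneComplement_of_lt
    (hmul : ∀ α ∈ Icc (0 : ℝ) 1, ∀ β ∈ Icc (0 : ℝ) 1, F (α * β) = (F α).comp (F β))
    (hinj : ∀ α ∈ Ioc (0 : ℝ) 1, Function.Injective (F α))
    {α β : ℝ} (hα : α ∈ Icc (0 : ℝ) 1) (hβ : β ∈ Icc (0 : ℝ) 1) (hαβ : α < β) :
    Disjoint (F α '' coneComplement F) (F β '' coneComplement F) := by
  rw [disjoint_left]
  rintro _ ⟨c, -, rfl⟩ ⟨c', hc', heq⟩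
  have hβ0 : 0 < β := hα.1.trans_lt hαβ
  have hγ : α / β ∈ Ico (0 : ℝ) 1 := ⟨div_nonneg hα.1 hβ0.le, (div_lt_one hβ0).2 hαβ⟩
  have hfactor : F β (F (α / β) c) = F β c' := by
    rw [← ContinuousMap.comp_apply, ← hmul β hβ _ ⟨hγ.1, hγ.2.le⟩,
      mul_div_cancel₀ α hβ0.ne', heq]
  exact mem_coneComplement.1 hc' _ hγ c (hinj β ⟨hβ0, hβ.2⟩ hfactor)

lemma exists_ne_of_injOn {x₀ : X} (hinjF : InjOn F (Icc 0 1))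
    (h0 : ∀ y, F 0 y = x₀) (h1 : ∀ y, F 1 y = y) : ∃ x, x ≠ x₀ := by
  by_contra! h
  have hF : F 0 = F 1 := ContinuousMap.ext fun y => by rw [h0, h1, h y]
  exact zero_ne_one (hinjF (left_mem_Icc.2 zero_le_one) (right_mem_Icc.2 zero_le_one) hF)

end

theorem stmt_11_general {X : Type*} [TopologicalSpace X] [CompactSpace X] [T2Space X] (x₀ : X)
    (F : ℝ → C(X, X))
    (hcont : ContinuousOn F (Set.Icc (0 : ℝ) 1))
    (hinjF : Set.InjOn F (Set.Icc (0 : ℝ) 1))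
    (hmul : ∀ α ∈ Set.Icc (0 : ℝ) 1, ∀ β ∈ Set.Icc (0 : ℝ) 1,
      F (α * β) = (F α).comp (F β))
    (h0 : ∀ x : X, F 0 x = x₀)
    (h1 : ∀ x : X, F 1 x = x)
    (hinj : ∀ α ∈ Set.Ioc (0 : ℝ) 1, Function.Injective (F α)) :
    (∀ α ∈ Set.Icc (0 : ℝ) 1, (F α '' coneComplement F).Nonempty) ∧
    (∀ α ∈ Set.Icc (0 : ℝ) 1, ∀ β ∈ Set.Icc (0 : ℝ) 1, α ≠ β →
      Disjoint (F α '' coneComplement F) (F β '' coneComplement F)) ∧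
    (⋃ α ∈ Set.Icc (0 : ℝ) 1, F α '' coneComplement F) = Set.univ := by
  have hcover := fun x => exists_mem_image_coneComplement (x := x) hcont hmul h0 h1
  obtain ⟨x, hx⟩ := exists_ne_of_injOn hinjF h0 h1
  obtain ⟨-, -, c, hc, -⟩ := hcover x hx
  refine ⟨fun α _ => ⟨F α c, c, hc, rfl⟩, fun α hα β hβ hne => ?_, ?_⟩
  · rcases hne.lt_or_gt with h | h
    · exact disjoint_image_coneComplement_of_lt hmul hinj hα hβ h
    · exact (disjoint_image_coneComplement_of_lt hmul hinj hβ hα h).symm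
  · refine eq_univ_of_forall fun y => mem_iUnion₂.2 ?_
    by_cases hy : y = x₀
    · exact ⟨0, left_mem_Icc.2 zero_le_one, c, hc, by rw [h0, hy]⟩
    · obtain ⟨α, hα, hyα⟩ := hcover y hy
      exact ⟨α, hα, hyα⟩

/-- For a compact Hausdorff `X` and a continuous injective monoid homomorphism
`F : ([0,1],×) → (C_{x₀}(X),∘)` with `F 0` constant at `x₀`, `F 1 = Id`, and each `F α`
injective for `α ∈ (0,1]`, the sets `{F(α)(C)}_{α ∈ [0,1]}` form a partition of `X`. -/
theorem stmt_11 {X : Type*} [TopologicalSpace X] [CompactSpace X] [T2Space X] (x₀ : X)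
    (F : ℝ → C(X, X))
    (hcont : ContinuousOn F (Set.Icc (0 : ℝ) 1))
    (hinjF : Set.InjOn F (Set.Icc (0 : ℝ) 1))
    (hmul : ∀ α ∈ Set.Icc (0 : ℝ) 1, ∀ β ∈ Set.Icc (0 : ℝ) 1,
      F (α * β) = (F α).comp (F β))
    (hfix : ∀ α ∈ Set.Icc (0 : ℝ) 1, F α x₀ = x₀)
    (h0 : ∀ x : X, F 0 x = x₀)
    (h1 : ∀ x : X, F 1 x = x)
    (hinj : ∀ α ∈ Set.Ioc (0 : ℝ) 1, Function.Injective (F α)) :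
    (∀ α ∈ Set.Icc (0 : ℝ) 1, (F α '' coneComplement F).Nonempty) ∧
    (∀ α ∈ Set.Icc (0 : ℝ) 1, ∀ β ∈ Set.Icc (0 : ℝ) 1, α ≠ β →
      Disjoint (F α '' coneComplement F) (F β '' coneComplement F)) ∧
    (⋃ α ∈ Set.Icc (0 : ℝ) 1, F α '' coneComplement F) = Set.univ :=
  stmt_11_general x₀ F hcont hinjF hmul h0 h1 hinj
end

section
/- Let X be a compact Hausdorff space, x₀ ∈ X, and F : ([0,1],×) → (C_{x₀}(X),∘) a continuous injective monoid homomorphism with F(0) the constant map at x₀, F(1) = Id_X, and F(α) injective for α ∈ (0,1]. Let C = X − ⋃_{α∈[0,1)} F(α)(X). If ⋃_{α∈[0,1)} F(α)(X) is open in X, then the map f' : 𝒞_{x₀}([0,1],C) → X defined by x₀ ↦ x₀ and (α,c) ↦ F(α)(c) is a homeomorphism. -/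
open Set Topology

/-- If moreover `⋃_{α ∈ [0,1)} F(α)(X)` is open, then the natural map from the cone on
`C = X − ⋃_{α ∈ [0,1)} F(α)(X)` to `X`, sending `(α, c) ↦ F(α)(c)`, is a
homeomorphism. -/
theorem stmt_12 {X : Type*} [TopologicalSpace X] [CompactSpace X] [T2Space X] (x₀ : X)
    (F : ℝ → C(X, X))
    (hcont : ContinuousOn F (Set.Icc (0 : ℝ) 1))
    (hinjF : Set.InjOn F (Set.Icc (0 : ℝ) 1))
    (hmul : ∀ α ∈ Set.Icc (0 : ℝ) 1, ∀ β ∈ Set.Icc (0 : ℝ) 1,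
      F (α * β) = (F α).comp (F β))
    (hfix : ∀ α ∈ Set.Icc (0 : ℝ) 1, F α x₀ = x₀)
    (h0 : ∀ x : X, F 0 x = x₀)
    (h1 : ∀ x : X, F 1 x = x)
    (hinj : ∀ α ∈ Set.Ioc (0 : ℝ) 1, Function.Injective (F α))
    (hopen : IsOpen (⋃ α ∈ Set.Ico (0 : ℝ) 1, Set.range (F α))) :
    ∃ h : Cone (coneComplement F) ≃ₜ X,
      ∀ (a : Set.Icc (0 : ℝ) 1) (c : coneComplement F),
        h (Quotient.mk (coneSetoid (coneComplement F)) (a, c)) = F a.1 c.1 := by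
  classical
  -- C is closed, hence compact
  have hCclosed : IsClosed (coneComplement F) := by
    have hE : coneComplement F = (⋃ α ∈ Set.Ico (0 : ℝ) 1, Set.range (F α))ᶜ := by
      simp [coneComplement, Set.compl_eq_univ_diff]
    rw [hE]; exact hopen.isClosed_compl
  haveI : CompactSpace (coneComplement F) :=
    isCompact_iff_compactSpace.mp hCclosed.isCompact
  haveI : CompactSpace (Set.Icc (0:ℝ) 1) := isCompact_iff_compactSpace.mp isCompact_Icc
  have hmemC : ∀ (c : X), c ∈ coneComplement F → ∀ β ∈ Set.Ico (0:ℝ) 1,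
      c ∉ Set.range (F β) := by
    intro c hc β hβ hmem
    exact hc.2 (Set.mem_biUnion hβ hmem)
  -- continuity of evaluation
  have hFc : Continuous fun a : Set.Icc (0:ℝ) 1 => F a.1 := hcont.restrict
  have heval : Continuous fun p : Set.Icc (0:ℝ) 1 × X => F p.1.1 p.2 :=
    continuous_eval.comp ((hFc.comp continuous_fst).prodMk continuous_snd)
  -- key surjectivity lemma
  have keyA : ∀ x : X, x = x₀ ∨
      ∃ (α : Set.Icc (0:ℝ) 1) (c : coneComplement F), 0 < α.1 ∧ F α.1 c.1 = x := by
    intro x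
    set K : Set (Set.Icc (0:ℝ) 1 × X) := {p | F p.1.1 p.2 = x} with hK
    have hKc : IsClosed K := isClosed_eq heval continuous_const
    have hKne : K.Nonempty := ⟨(⟨1, by norm_num⟩, x), h1 x⟩
    obtain ⟨p, hpK, hmin⟩ := hKc.isCompact.exists_isMinOn hKne
      ((continuous_subtype_val.comp continuous_fst).continuousOn
        (f := fun p : Set.Icc (0:ℝ) 1 × X => p.1.1))
    obtain ⟨⟨α, hα⟩, cx⟩ := p
    have hpK' : F α cx = x := hpK
    rcases eq_or_lt_of_le hα.1 with h0α | h0α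
    · left
      rw [← hpK', ← h0α, h0 cx]
    · right
      by_cases hcx : cx ∈ coneComplement F
      · exact ⟨⟨α, hα⟩, ⟨cx, hcx⟩, h0α, hpK'⟩
      · exfalso
        have hmemU : cx ∈ ⋃ β ∈ Set.Ico (0:ℝ) 1, Set.range (F β) := by
          by_contra h
          exact hcx ⟨trivial, h⟩
        obtain ⟨β, hβ, d, hd⟩ : ∃ β ∈ Set.Ico (0:ℝ) 1, ∃ d, F β d = cx := by
          simpa [Set.mem_iUnion] using hmemU
        have hαβ : α * β ∈ Set.Icc (0:ℝ) 1 :=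
          ⟨mul_nonneg hα.1 hβ.1, mul_le_one₀ hα.2 hβ.1 hβ.2.le⟩
        have hmem : ((⟨α*β, hαβ⟩ : Set.Icc (0:ℝ) 1), d) ∈ K := by
          show F (α*β) d = x
          rw [hmul α hα β ⟨hβ.1, hβ.2.le⟩]
          show F α (F β d) = x
          rw [hd]; exact hpK'
        have hle : α ≤ α * β := isMinOn_iff.mp hmin _ hmem
        nlinarith [hβ.2, hβ.1, mul_lt_of_lt_one_right h0α hβ.2]
  -- key injectivity lemma
  have key2 : ∀ (α β : Set.Icc (0:ℝ) 1) (c d : coneComplement F), α.1 ≤ β.1 →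
      F α.1 c.1 = F β.1 d.1 → (α = β ∧ c = d) ∨ (α.1 = 0 ∧ β.1 = 0) := by
    intro α β c d hle heq
    rcases eq_or_lt_of_le β.2.1 with hβ0 | hβ0
    · right
      constructor
      · linarith [α.2.1]
      · exact hβ0.symm
    · left
      have hβne : β.1 ≠ 0 := ne_of_gt hβ0
      have hq : α.1 / β.1 ∈ Set.Icc (0:ℝ) 1 :=
        ⟨div_nonneg α.2.1 β.2.1, (div_le_one hβ0).mpr hle⟩
      have hEq : F α.1 c.1 = F β.1 (F (α.1/β.1) c.1) := by
        have h1' : β.1 * (α.1 / β.1) = α.1 := by field_simp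
        calc F α.1 c.1 = F (β.1 * (α.1/β.1)) c.1 := by rw [h1']
        _ = F β.1 (F (α.1/β.1) c.1) := by rw [hmul β.1 β.2 _ hq]; rfl
      have hd' : F (α.1/β.1) c.1 = d.1 :=
        hinj β.1 ⟨hβ0, β.2.2⟩ (hEq.symm.trans heq)
      have hq1 : α.1 / β.1 = 1 := by
        by_contra hne
        exact hmemC d.1 d.2 _ ⟨hq.1, lt_of_le_of_ne hq.2 hne⟩ ⟨c.1, hd'⟩
      have hab : α.1 = β.1 := by
        field_simp at hq1; exact hq1
      refine ⟨Subtype.ext hab, Subtype.ext ?_⟩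
      rw [← hd', hq1, h1]
  -- nonemptiness of C
  have hCne : ∃ c, c ∈ coneComplement F := by
    have hne : F 0 ≠ F 1 := by
      intro h
      have := hinjF (Set.left_mem_Icc.mpr zero_le_one) (Set.right_mem_Icc.mpr zero_le_one) h
      norm_num at this
    have hx : ∃ x : X, F 0 x ≠ F 1 x := by
      by_contra h
      push_neg at h
      exact hne (ContinuousMap.ext h)
    obtain ⟨x, hx⟩ := hx
    rw [h0 x, h1 x] at hx
    rcases keyA x with h | ⟨α, c, _, _⟩
    · exact absurd h.symm hx
    · exact ⟨c.1, c.2⟩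
  -- the quotient map
  letI : Setoid (Set.Icc (0:ℝ) 1 × coneComplement F) := coneSetoid (coneComplement F)
  set f : Set.Icc (0:ℝ) 1 × coneComplement F → X := fun p => F p.1.1 p.2.1 with hf
  have hfc : Continuous f :=
    heval.comp (continuous_fst.prodMk (continuous_subtype_val.comp continuous_snd))
  have hresp : ∀ p q : Set.Icc (0:ℝ) 1 × coneComplement F, p ≈ q → f p = f q := by
    rintro p q (rfl | ⟨ha, hb⟩)
    · rfl
    · show F p.1.1 p.2.1 = F q.1.1 q.2.1
      rw [ha, hb, h0, h0]
  set g : Cone (coneComplement F) → X := Quotient.lift f hresp with hg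
  have hgc : Continuous g := hfc.quotient_lift hresp
  have hbij : Function.Bijective g := by
    constructor
    · intro a b
      induction a using Quotient.inductionOn with | h p => ?_
      induction b using Quotient.inductionOn with | h q => ?_
      intro hpq
      have hpq' : f p = f q := hpq
      apply Quotient.sound
      rcases le_total p.1.1 q.1.1 with h | h
      · rcases key2 p.1 q.1 p.2 q.2 h hpq' with ⟨ha, hb⟩ | h'
        · exact Or.inl (Prod.ext ha hb)
        · exact Or.inr h'
      · rcases key2 q.1 p.1 q.2 p.2 h hpq'.symm with ⟨ha, hb⟩ | ⟨ha, hb⟩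
        · exact Or.inl (Prod.ext ha.symm hb.symm)
        · exact Or.inr ⟨hb, ha⟩
    · intro x
      rcases keyA x with rfl | ⟨α, c, _, hFc'⟩
      · obtain ⟨c₀, hc₀⟩ := hCne
        exact ⟨Quotient.mk _ (⟨0, by norm_num⟩, ⟨c₀, hc₀⟩), h0 c₀⟩
      · exact ⟨Quotient.mk _ (α, c), hFc'⟩
  haveI : CompactSpace (Cone (coneComplement F)) :=
    (inferInstanceAs (CompactSpace (Quotient (coneSetoid (coneComplement F)))))
  have hec : Continuous (Equiv.ofBijective g hbij) := hgc
  exact ⟨hec.homeoOfEquivCompactToT2, fun a c => rfl⟩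
end

section
/- Let X be a locally compact Hausdorff space, x₀ ∈ X, and F : ([0,∞),×) → (C_{x₀}(X),∘) a continuous injective monoid homomorphism with F(0) the constant map at x₀ and F(1) = Id_X. If D ⊆ X is compact with x₀ ∈ Int(D) and ⋃_{α∈[0,1)} F(α)(D) ⊆ Int(D), then ⋃_{α∈[0,1)} F(α)(D) = Int(D). -/
open Set Topology

/-- If `D` is compact with `x₀ ∈ Int D` and `⋃_{α ∈ [0,1)} F(α)(D) ⊆ Int D`, then
`⋃_{α ∈ [0,1)} F(α)(D) = Int D`. -/
theorem stmt_14 {X : Type*} [TopologicalSpace X] [LocallyCompactSpace X] [T2Space X]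
    (x₀ : X) (F : ℝ → C(X, X))
    (hcont : ContinuousOn F (Set.Ici (0 : ℝ)))
    (hinjF : Set.InjOn F (Set.Ici (0 : ℝ)))
    (hmul : ∀ α ∈ Set.Ici (0 : ℝ), ∀ β ∈ Set.Ici (0 : ℝ),
      F (α * β) = (F α).comp (F β))
    (hfix : ∀ α ∈ Set.Ici (0 : ℝ), F α x₀ = x₀)
    (h0 : ∀ x : X, F 0 x = x₀)
    (h1 : ∀ x : X, F 1 x = x)
    (D : Set X) (hDcpt : IsCompact D) (hx₀ : x₀ ∈ interior D)
    (hsub : (⋃ α ∈ Set.Ico (0 : ℝ) 1, F α '' D) ⊆ interior D) :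
    (⋃ α ∈ Set.Ico (0 : ℝ) 1, F α '' D) = interior D := by
  apply Subset.antisymm hsub
  intro x hx
  have hg : ContinuousOn (fun t => F t x) (Set.Ici (0 : ℝ)) :=
    (continuous_eval_const x).comp_continuousOn hcont
  have hcontat : ContinuousAt (fun t => F t x) 1 :=
    hg.continuousAt (Ici_mem_nhds (by norm_num : (0:ℝ) < 1))
  have hx1 : (fun t => F t x) 1 ∈ interior D := by simpa [h1] using hx
  have hev : ∀ᶠ t in 𝓝 (1:ℝ), F t x ∈ interior D :=
    hcontat.eventually_mem (isOpen_interior.mem_nhds hx1)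
  obtain ⟨ε, hε, hball⟩ := Metric.eventually_nhds_iff.mp hev
  set t : ℝ := 1 + ε / 2 with ht_def
  have ht1 : 1 < t := by rw [ht_def]; linarith
  have ht0 : (0:ℝ) < t := by linarith
  have htD : F t x ∈ D := by
    refine interior_subset (hball ?_)
    rw [Real.dist_eq, ht_def]
    rw [abs_of_pos (by linarith)]
    linarith
  have hα0 : (0:ℝ) ≤ t⁻¹ := by positivity
  have hα1 : t⁻¹ < 1 := by
    rw [inv_lt_one_iff₀]; right; exact ht1
  have hcomp : F (t⁻¹ * t) = (F t⁻¹).comp (F t) :=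
    hmul t⁻¹ hα0 t ht0.le
  have hxeq : F t⁻¹ (F t x) = x := by
    have : F (t⁻¹ * t) x = (F t⁻¹) (F t x) := by rw [hcomp]; rfl
    rw [inv_mul_cancel₀ ht0.ne'] at this
    rw [← this, h1]
  exact mem_iUnion₂.mpr ⟨t⁻¹, ⟨hα0, hα1⟩, ⟨F t x, htD, hxeq⟩⟩
end

section
/- Let X be a locally compact Hausdorff space, x₀ ∈ X, and F : ([0,∞),×) → (C_{x₀}(X),∘) a continuous injective monoid homomorphism with F(0) the constant map at x₀ and F(1) = Id_X. If D ⊆ X is compact with x₀ ∈ Int(D) and ⋃_{α∈[0,1)} F(α)(D) ⊆ Int(D), then the map f' : 𝒞_{x₀}([0,∞), Bd(D)) → X sending x₀ ↦ x₀ and (α,c) ↦ F(α)(c) is a homeomorphism. -/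
/-! The map `(α, c) ↦ F α c` is a continuous bijection from the cone onto `X`. For `x ≠ x₀` the
orbit `β ↦ F β x` lies in `Int D` for small `β` and, since `F β⁻¹` squeezes `D` into any
neighbourhood of `x₀`, leaves `D` for large `β`; by connectedness it crosses `Bd D`, which gives
surjectivity. Since `F t` maps `D` into `Int D` for `t < 1`, the ray `α ↦ F α c` through a point
`c ∈ Bd D` meets `Bd D` only at `α = 1`, which gives injectivity. The same contraction bounds `α`
on the preimage of a compact set, so the map is proper, hence closed, hence a homeomorphism. -/

open Set Topology

/-- The relation on `[0,∞) × C` identifying `{0} × C` to a point. -/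
def coneSetoidInf (C : Type*) : Setoid (Set.Ici (0 : ℝ) × C) where
  r p q := p = q ∨ (p.1.1 = 0 ∧ q.1.1 = 0)
  iseqv := by
    refine ⟨fun p => Or.inl rfl, ?_, ?_⟩
    · rintro p q (rfl | ⟨h1, h2⟩)
      · exact Or.inl rfl
      · exact Or.inr ⟨h2, h1⟩
    · rintro p q r (rfl | ⟨h1, h2⟩) (rfl | ⟨h3, h4⟩)
      · exact Or.inl rfl
      · exact Or.inr ⟨h3, h4⟩
      · exact Or.inr ⟨h1, h2⟩
      · exact Or.inr ⟨h1, h4⟩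

/-- The cone `𝒞_{x₀}([0,∞), C)`: the quotient of `[0,∞) × C` collapsing `{0} × C`. -/
def ConeInf (C : Type*) : Type _ := Quotient (coneSetoidInf C)

instance (C : Type*) [TopologicalSpace C] : TopologicalSpace (ConeInf C) :=
  inferInstanceAs (TopologicalSpace (Quotient (coneSetoidInf C)))

open Filter

/-- `F` is a continuous monoid homomorphism `([0,∞), ×) → (C(X, X), ∘)` sending `0` to the constant
map at `x₀` and `1` to the identity; its values off `[0,∞)` are irrelevant. -/
structure IsMulFlow {X : Type*} [TopologicalSpace X] (F : ℝ → C(X, X)) (x₀ : X) : Prop where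
  map_mul : ∀ α ∈ Ici (0 : ℝ), ∀ β ∈ Ici (0 : ℝ), F (α * β) = (F α).comp (F β)
  map_zero_apply : ∀ x, F 0 x = x₀
  map_one_apply : ∀ x, F 1 x = x
  continuousOn : ContinuousOn F (Ici 0)

namespace IsMulFlow

variable {X : Type*} [TopologicalSpace X] {F : ℝ → C(X, X)} {x₀ : X} {α β : ℝ} {D : Set X}

theorem apply_mul (hF : IsMulFlow F x₀) (hα : 0 ≤ α) (hβ : 0 ≤ β) (x : X) :
    F (α * β) x = F α (F β x) := by
  rw [hF.map_mul α hα β hβ]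
  rfl

theorem inv_apply_apply (hF : IsMulFlow F x₀) (hα : 0 < α) (x : X) : F α⁻¹ (F α x) = x := by
  rw [← hF.apply_mul (inv_nonneg.2 hα.le) hα.le, inv_mul_cancel₀ hα.ne', hF.map_one_apply]

theorem injective (hF : IsMulFlow F x₀) (hα : 0 < α) : Function.Injective (F α) :=
  Function.LeftInverse.injective (hF.inv_apply_apply hα)

theorem continuous_uncurry [LocallyCompactSpace X] (hF : IsMulFlow F x₀) :
    Continuous fun p : Ici (0 : ℝ) × X => F p.1 p.2 :=
  continuous_eval.comp ((hF.continuousOn.domRestrict.comp continuous_fst).prodMk continuous_snd)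

theorem eventually_mapsTo (hF : IsMulFlow F x₀) {K U : Set X} (hK : IsCompact K) (hU : IsOpen U)
    (hx₀ : x₀ ∈ U) : ∀ᶠ γ in 𝓝[>] (0 : ℝ), MapsTo (F γ) K U :=
  nhdsWithin_mono _ Ioi_subset_Ici_self <| hF.continuousOn 0 self_mem_Ici <|
    ContinuousMap.eventually_mapsTo hK hU fun x _ => (hF.map_zero_apply x).symm ▸ hx₀

theorem eventually_apply_notMem [T1Space X] (hF : IsMulFlow F x₀) (hD : IsCompact D) {x : X}
    (hx : x ≠ x₀) : ∀ᶠ β in atTop, F β x ∉ D := by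
  filter_upwards [tendsto_inv_atTop_nhdsGT_zero.eventually
      (hF.eventually_mapsTo hD isOpen_compl_singleton hx.symm), eventually_gt_atTop 0]
    with β hβ hβ0 hxD
  exact hβ hxD (hF.inv_apply_apply hβ0 x)

theorem exists_pos_apply_mem_frontier [T1Space X] (hF : IsMulFlow F x₀) (hD : IsCompact D)
    (hx₀ : x₀ ∈ interior D) {x : X} (hx : x ≠ x₀) : ∃ β > 0, F β x ∈ frontier D := by
  let orbit : Ioi (0 : ℝ) → X := fun β => F β x
  have horbit : Continuous orbit :=
    (continuous_eval_const x).comp (hF.continuousOn.mono Ioi_subset_Ici_self).domRestrict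
  have : PreconnectedSpace (Ioi (0 : ℝ)) := Subtype.preconnectedSpace isPreconnected_Ioi
  obtain ⟨γ, hγ, hγ0⟩ :=
    ((hF.eventually_mapsTo isCompact_singleton isOpen_interior hx₀).and self_mem_nhdsWithin).exists
  obtain ⟨β, hβ, hβ0⟩ := ((hF.eventually_apply_notMem hD hx).and (eventually_gt_atTop 0)).exists
  obtain ⟨b, hb⟩ := (nonempty_frontier_iff (s := orbit ⁻¹' D)).2
    ⟨⟨⟨γ, hγ0⟩, show F γ x ∈ D from interior_subset (hγ rfl)⟩,
      (ne_univ_iff_exists_notMem _).2 ⟨⟨β, hβ0⟩, hβ⟩⟩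
  exact ⟨b, b.2, horbit.frontier_preimage_subset D hb⟩

theorem le_of_apply_eq_apply (hF : IsMulFlow F x₀)
    (hD : ∀ γ ∈ Ico (0 : ℝ) 1, MapsTo (F γ) D (interior D)) {y z : X} (hα : 0 ≤ α) (hβ : 0 ≤ β)
    (h : F α y = F β z) (hy : y ∈ D) (hz : z ∉ interior D) : β ≤ α := by
  obtain rfl | hβ := hβ.eq_or_lt
  · exact hα
  by_contra! hαβ
  have hz' : z = F (β⁻¹ * α) y := by
    rw [hF.apply_mul (inv_nonneg.2 hβ.le) hα, h, hF.inv_apply_apply hβ]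
  exact hz (hz' ▸ hD _ ⟨by positivity, by rwa [inv_mul_lt_one₀ hβ]⟩ hy)

def coneMap (hF : IsMulFlow F x₀) (S : Set X) : ConeInf S → X :=
  Quotient.lift (fun p => F p.1 p.2) <| by
    rintro p q (rfl | ⟨hp, hq⟩)
    · rfl
    · simp only [hp, hq, hF.map_zero_apply]

theorem coneMap_mk (hF : IsMulFlow F x₀) (S : Set X) (a : Ici (0 : ℝ)) (c : S) :
    hF.coneMap S (Quotient.mk _ (a, c)) = F a c :=
  rfl

theorem continuous_coneMap [LocallyCompactSpace X] (hF : IsMulFlow F x₀) (S : Set X) :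
    Continuous (hF.coneMap S) :=
  (hF.continuous_uncurry.comp
    (continuous_fst.prodMk (continuous_subtype_val.comp continuous_snd))).quotient_lift _

theorem injective_coneMap (hF : IsMulFlow F x₀) (hDc : IsClosed D)
    (hD : ∀ γ ∈ Ico (0 : ℝ) 1, MapsTo (F γ) D (interior D)) :
    Function.Injective (hF.coneMap (frontier D)) := by
  rintro ⟨a, c⟩ ⟨b, d⟩ h
  change F a c = F b d at h
  have hab : (a : ℝ) = b :=
    le_antisymm (hF.le_of_apply_eq_apply hD b.2 a.2 h.symm (hDc.frontier_subset d.2) c.2.2)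
      (hF.le_of_apply_eq_apply hD a.2 b.2 h (hDc.frontier_subset c.2) d.2.2)
  obtain ha | ha := (mem_Ici.1 a.2).eq_or_lt
  · exact Quotient.sound (Or.inr ⟨ha.symm, hab ▸ ha.symm⟩)
  · refine Quotient.sound (Or.inl (Prod.ext (Subtype.ext hab) (Subtype.ext ?_)))
    exact hF.injective ha (h.trans (by rw [hab]))

theorem surjective_coneMap [T1Space X] (hF : IsMulFlow F x₀) (hD : IsCompact D)
    (hx₀ : x₀ ∈ interior D) (h01 : F 0 ≠ F 1) : Function.Surjective (hF.coneMap (frontier D)) := by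
  intro x
  by_cases hx : x = x₀
  · obtain ⟨y, hy⟩ : ∃ y, y ≠ x₀ := by
      by_contra! h
      exact h01 (ContinuousMap.ext fun y => by rw [hF.map_zero_apply, hF.map_one_apply, h y])
    obtain ⟨β, -, hβy⟩ := hF.exists_pos_apply_mem_frontier hD hx₀ hy
    exact ⟨Quotient.mk _ (⟨0, self_mem_Ici⟩, ⟨_, hβy⟩), (hF.map_zero_apply _).trans hx.symm⟩
  · obtain ⟨β, hβ, hβx⟩ := hF.exists_pos_apply_mem_frontier hD hx₀ hx
    exact ⟨Quotient.mk _ (⟨β⁻¹, inv_nonneg.2 hβ.le⟩, ⟨_, hβx⟩), hF.inv_apply_apply hβ x⟩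

theorem isCompact_preimage_coneMap [T2Space X] [LocallyCompactSpace X] (hF : IsMulFlow F x₀)
    (hDc : IsCompact D) (hx₀ : x₀ ∈ interior D)
    (hD : ∀ γ ∈ Ico (0 : ℝ) 1, MapsTo (F γ) D (interior D)) {K : Set X} (hK : IsCompact K) :
    IsCompact (hF.coneMap (frontier D) ⁻¹' K) := by
  obtain ⟨γ, hγK, hγ⟩ :=
    ((hF.eventually_mapsTo hK isOpen_interior hx₀).and self_mem_nhdsWithin).exists
  have hfr : IsCompact (frontier D) :=
    hDc.of_isClosed_subset isClosed_frontier hDc.isClosed.frontier_subset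
  have hcpt : IsCompact (Quotient.mk (coneSetoidInf (frontier D)) ''
      ((Subtype.val ⁻¹' Icc 0 γ⁻¹) ×ˢ univ)) :=
    ((isClosed_Ici.isClosedEmbedding_subtypeVal.isCompact_preimage isCompact_Icc).prod
      (isCompact_iff_isCompact_univ.1 hfr)).image continuous_quotient_mk'
  refine hcpt.of_isClosed_subset (hK.isClosed.preimage (hF.continuous_coneMap _)) ?_
  rintro ⟨a, c⟩ hac
  change F a c ∈ K at hac
  refine ⟨(a, c), ⟨⟨a.2, ?_⟩, trivial⟩, rfl⟩
  exact hF.le_of_apply_eq_apply hD (inv_nonneg.2 hγ.le) a.2 (hF.inv_apply_apply hγ _)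
    (interior_subset (hγK hac)) c.2.2

end IsMulFlow

theorem stmt_15_general {X : Type*} [TopologicalSpace X] [LocallyCompactSpace X] [T2Space X]
    (x₀ : X) (F : ℝ → C(X, X))
    (hcont : ContinuousOn F (Set.Ici (0 : ℝ)))
    (hinjF : Set.InjOn F (Set.Ici (0 : ℝ)))
    (hmul : ∀ α ∈ Set.Ici (0 : ℝ), ∀ β ∈ Set.Ici (0 : ℝ),
      F (α * β) = (F α).comp (F β))
    (h0 : ∀ x : X, F 0 x = x₀)
    (h1 : ∀ x : X, F 1 x = x)
    (D : Set X) (hDcpt : IsCompact D) (hx₀ : x₀ ∈ interior D)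
    (hsub : (⋃ α ∈ Set.Ico (0 : ℝ) 1, F α '' D) ⊆ interior D) :
    ∃ h : ConeInf (frontier D) ≃ₜ X,
      ∀ (a : Set.Ici (0 : ℝ)) (c : frontier D),
        h (Quotient.mk (coneSetoidInf (frontier D)) (a, c)) = F a.1 c.1 := by
  have hF : IsMulFlow F x₀ := ⟨hmul, h0, h1, hcont⟩
  have hD : ∀ γ ∈ Ico (0 : ℝ) 1, MapsTo (F γ) D (interior D) :=
    fun γ hγ x hx => hsub (mem_biUnion hγ (mem_image_of_mem _ hx))
  have h01 : F 0 ≠ F 1 := fun h => zero_ne_one (hinjF self_mem_Ici (mem_Ici.2 zero_le_one) h)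
  have hproper : IsProperMap (hF.coneMap (frontier D)) :=
    isProperMap_iff_isCompact_preimage.2
      ⟨hF.continuous_coneMap _, fun _ hK => hF.isCompact_preimage_coneMap hDcpt hx₀ hD hK⟩
  let e := Equiv.ofBijective _
    ⟨hF.injective_coneMap hDcpt.isClosed hD, hF.surjective_coneMap hDcpt hx₀ h01⟩
  exact ⟨e.toHomeomorphOfContinuousClosed hproper.continuous hproper.isClosedMap,
    hF.coneMap_mk _⟩

/-- Under the hypotheses of the locally compact cone proposition, the natural map
`𝒞_{x₀}([0,∞), Bd D) → X`, `(α, c) ↦ F(α)(c)`, is a homeomorphism. -/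
theorem stmt_15 {X : Type*} [TopologicalSpace X] [LocallyCompactSpace X] [T2Space X]
    (x₀ : X) (F : ℝ → C(X, X))
    (hcont : ContinuousOn F (Set.Ici (0 : ℝ)))
    (hinjF : Set.InjOn F (Set.Ici (0 : ℝ)))
    (hmul : ∀ α ∈ Set.Ici (0 : ℝ), ∀ β ∈ Set.Ici (0 : ℝ),
      F (α * β) = (F α).comp (F β))
    (hfix : ∀ α ∈ Set.Ici (0 : ℝ), F α x₀ = x₀)
    (h0 : ∀ x : X, F 0 x = x₀)
    (h1 : ∀ x : X, F 1 x = x)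
    (D : Set X) (hDcpt : IsCompact D) (hx₀ : x₀ ∈ interior D)
    (hsub : (⋃ α ∈ Set.Ico (0 : ℝ) 1, F α '' D) ⊆ interior D) :
    ∃ h : ConeInf (frontier D) ≃ₜ X,
      ∀ (a : Set.Ici (0 : ℝ)) (c : frontier D),
        h (Quotient.mk (coneSetoidInf (frontier D)) (a, c)) = F a.1 c.1 :=
  stmt_15_general x₀ F hcont hinjF hmul h0 h1 D hDcpt hx₀ hsub
end

section
/- Let (X,*) be a topological group with identity x₀, metrized by d, with a dilation family {T_α}_{α∈[0,∞)} on (X,d,x₀) consisting of group homomorphisms, and assume the left translations are equicontinuous with respect to d. Let D(x,y) = sup{ d(c*x,c*y) : c ∈ X } and define ‖x‖ := D(x,x₀). Then ‖·‖ is a group norm: ‖x⁻¹‖ = ‖x‖ and ‖x*y‖ ≤ ‖x‖ + ‖y‖ for all x,y ∈ X, and moreover ‖T_α(x)‖ = α·‖x‖ for all α ≥ 0 and x ∈ X (homogeneity). -/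
open Filter Topology Set

/-- `D(x,y) = sup { d(c*x, c*y) : c ∈ X }`. -/
noncomputable def transDist {X : Type*} [Group X] [MetricSpace X] (x y : X) : ℝ :=
  ⨆ c : X, dist (c * x) (c * y)

/-!
Writing `‖x‖ = sup_c d(c x, c)`, inversion and the dilations act on the index `c` by
bijections (`c ↦ c x` and `c ↦ T_α c`), so they only reindex the supremum, and
subadditivity is the triangle inequality through `c x`. The one real point is that the
supremum is finite: equicontinuity at `1` bounds `d(c w, c)` by `1` for every `w` in a
ball `B(1, δ)`, and a small dilation `T_β` carries any `z` into that ball, so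
`d(c z, c) = β⁻¹ d(T_β c · T_β z, T_β c) ≤ β⁻¹`.
-/

namespace IsDilationFamily

variable {X : Type*} [MetricSpace X] {I : Set ℝ} {T : ℝ → X → X} {x₀ : X}

lemma apply_zero (hT : IsDilationFamily I T x₀) (h0 : 0 ∈ I) (x : X) : T 0 x = x₀ := by
  obtain ⟨-, -, hdist, hfix, -, -⟩ := hT
  simpa [hfix 0 h0] using hdist 0 h0 x x₀

lemma apply_one (hT : IsDilationFamily I T x₀) (h1 : 1 ∈ I) (x : X) : T 1 x = x := by
  obtain ⟨-, -, hdist, -, hcomp, -⟩ := hT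
  have hiso : Isometry (T 1) := Isometry.of_dist_eq fun a b => by rw [hdist 1 h1, one_mul]
  exact hiso.injective (by rw [hcomp 1 h1 1 h1, one_mul])

lemma surjective (hT : IsDilationFamily I T x₀) {α : ℝ} (hα : α ∈ I) (hα' : α⁻¹ ∈ I)
    (hne : α ≠ 0) : Function.Surjective (T α) := by
  obtain ⟨-, hmul, -, -, hcomp, -⟩ := id hT
  have h1 : (1 : ℝ) ∈ I := mul_inv_cancel₀ hne ▸ hmul α hα α⁻¹ hα'
  exact fun c => ⟨T α⁻¹ c, by rw [hcomp α hα α⁻¹ hα', mul_inv_cancel₀ hne, hT.apply_one h1]⟩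

end IsDilationFamily

section TransDist

variable {X : Type*} [Group X] [MetricSpace X]

lemma transDist_one_right (x : X) : transDist x 1 = ⨆ c : X, dist (c * x) c := by
  simp only [transDist, mul_one]

lemma transDist_inv_one (x : X) : transDist x⁻¹ 1 = transDist x 1 := by
  rw [transDist_one_right, transDist_one_right, ← (mul_right_surjective x).iSup_comp]
  simp [dist_comm]

lemma transDist_mul_one_le {x y : X} (hx : BddAbove (range fun c => dist (c * x) c))
    (hy : BddAbove (range fun c => dist (c * y) c)) :
    transDist (x * y) 1 ≤ transDist x 1 + transDist y 1 := by
  simp only [transDist_one_right]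
  refine ciSup_le fun c => ?_
  calc dist (c * (x * y)) c ≤ dist (c * x * y) (c * x) + dist (c * x) c := by
        rw [← mul_assoc]; exact dist_triangle _ _ _
    _ ≤ (⨆ c, dist (c * y) c) + ⨆ c, dist (c * x) c :=
        add_le_add (le_ciSup hy _) (le_ciSup hx _)
    _ = _ := add_comm _ _

lemma transDist_map_one {f : X →* X} (hf : Function.Surjective f) {α : ℝ} (hα : 0 ≤ α)
    (hdist : ∀ a b, dist (f a) (f b) = α * dist a b) (x : X) :
    transDist (f x) 1 = α * transDist x 1 := by
  simp only [transDist_one_right]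
  rw [Real.mul_iSup_of_nonneg hα, ← hf.iSup_comp]
  simp only [← map_mul, hdist]

lemma bddAbove_range_dist_mul_of_map {f : X →* X} {β M : ℝ} (hβ : 0 < β)
    (hdist : ∀ a b, dist (f a) (f b) = β * dist a b) {z : X}
    (hM : ∀ c, dist (c * f z) c ≤ M) : BddAbove (range fun c => dist (c * z) c) := by
  refine ⟨M / β, forall_mem_range.2 fun c => ?_⟩
  rw [le_div_iff₀ hβ, mul_comm (dist _ _), ← hdist, map_mul]
  exact hM (f c)

lemma bddAbove_range_dist_mul {T : ℝ → X → X}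
    (hhom : ∀ β > 0, ∀ a b : X, T β (a * b) = T β a * T β b)
    (hdist : ∀ β > 0, ∀ a b : X, dist (T β a) (T β b) = β * dist a b)
    {δ : ℝ} (hδ : 0 < δ) (hequi : ∀ w : X, dist 1 w < δ → ∀ c : X, dist c (c * w) < 1)
    (z : X) : BddAbove (range fun c => dist (c * z) c) := by
  set β := δ / (dist 1 z + 1)
  have hβ : 0 < β := by positivity
  let f : X →* X := MonoidHom.mk' (T β) (hhom β hβ)
  have hfz : dist 1 (f z) < δ := by
    calc dist 1 (f z) = dist (f 1) (f z) := by rw [map_one]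
      _ = β * dist 1 z := hdist β hβ 1 z
      _ = δ * (dist 1 z / (dist 1 z + 1)) := by ring
      _ < δ * 1 := mul_lt_mul_of_pos_left ((div_lt_one (by positivity)).2 (lt_add_one _)) hδ
      _ = δ := mul_one δ
  exact bddAbove_range_dist_mul_of_map (f := f) hβ (hdist β hβ) (M := 1) fun c =>
    (dist_comm c _ ▸ hequi (f z) hfz c).le

end TransDist

theorem stmt_19_general {X : Type*} [Group X] [MetricSpace X]
    (T : ℝ → X → X)
    (hT : IsDilationFamily (Set.Ici 0) T (1 : X))
    (hhom : ∀ α ∈ Set.Ici (0 : ℝ), ∀ x y : X, T α (x * y) = T α x * T α y)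
    (hequi : ∀ x : X, ∀ ε > (0 : ℝ), ∃ δ > (0 : ℝ), ∀ y : X, dist x y < δ →
      ∀ c : X, dist (c * x) (c * y) < ε) :
    (∀ x : X, transDist x⁻¹ (1 : X) = transDist x (1 : X)) ∧
    (∀ x y : X, transDist (x * y) (1 : X) ≤ transDist x (1 : X) + transDist y (1 : X)) ∧
    (∀ α ∈ Set.Ici (0 : ℝ), ∀ x : X,
      transDist (T α x) (1 : X) = α * transDist x (1 : X)) := by
  obtain ⟨-, -, hdist, -⟩ := id hT
  obtain ⟨δ, hδ, hequi₁⟩ := hequi 1 1 one_pos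
  have hbdd := bddAbove_range_dist_mul (fun β hβ => hhom β hβ.le) (fun β hβ => hdist β hβ.le)
    hδ (fun w hw c => by simpa using hequi₁ w hw c)
  refine ⟨transDist_inv_one, fun x y => transDist_mul_one_le (hbdd x) (hbdd y), ?_⟩
  intro α hα x
  rcases (mem_Ici.1 hα).eq_or_lt with rfl | hpos
  · simp [hT.apply_zero self_mem_Ici, transDist_one_right]
  · exact transDist_map_one (f := MonoidHom.mk' (T α) (hhom α hα))
      (hT.surjective hα (mem_Ici.2 (inv_nonneg.2 hα)) hpos.ne') hα (hdist α hα) x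

/-- The norm `‖x‖ = D(x, x₀)` induced by `D(x,y) = sup_c d(c*x, c*y)` is a group norm:
symmetric under inversion, subadditive, and homogeneous with respect to the dilations. -/
theorem stmt_19 {X : Type*} [Group X] [MetricSpace X] [IsTopologicalGroup X]
    (T : ℝ → X → X)
    (hT : IsDilationFamily (Set.Ici 0) T (1 : X))
    (hhom : ∀ α ∈ Set.Ici (0 : ℝ), ∀ x y : X, T α (x * y) = T α x * T α y)
    (hequi : ∀ x : X, ∀ ε > (0 : ℝ), ∃ δ > (0 : ℝ), ∀ y : X, dist x y < δ →
      ∀ c : X, dist (c * x) (c * y) < ε) :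
    (∀ x : X, transDist x⁻¹ (1 : X) = transDist x (1 : X)) ∧
    (∀ x y : X, transDist (x * y) (1 : X) ≤ transDist x (1 : X) + transDist y (1 : X)) ∧
    (∀ α ∈ Set.Ici (0 : ℝ), ∀ x : X,
      transDist (T α x) (1 : X) = α * transDist x (1 : X)) :=
  stmt_19_general T hT hhom hequi
end
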